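/- Let D : A → A be the unique k-algebra endomorphism with D(x₁) = h²·x₂ and D(x₂) = −h²·x₁ (it exists since (h²x₂)(−h²x₁) + (−h²x₁)(h²x₂) = 0). Then, as k-linear maps A → A: σ₂₂∘σ₁₁ + σ₁₂∘σ₂₁ = D and σ₁₁∘σ₂₂ + σ₂₁∘σ₁₂ = D; in particular the determinant det σ = σ₂₂∘σ₁₁ + σ₁₂∘σ₂₁ (corresponding to P = (−1, 0)) is a bijective k-algebra endomorphism of A. Moreover σ₂₂∘σ₁₁ + σ₂₁∘σ₁₂ ≠ D and σ₁₁∘σ₂₂ + σ₁₂∘σ₂₁ ≠ D as k-linear maps A → A. -/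

import Mathlib

/-!
Apply `σ` entrywise to `σ r`: this gives an algebra map `Σ : A → M₄(A)`, and the four sums
`σ (σ r 0 i) 1 j + σ (σ r 1 i) 0 j` are the entries of `w Σ(r)` for the row vector
`w = e_{(0,1)} + e_{(1,0)}`. The `r` with `w Σ(r) = D(r) w` form a subalgebra, so it suffices
to check `x₁` and `x₂`, where this is a direct computation. `D` is inverted by the analogous
map with `h²` replaced by `-h⁻²`, and the two wrong pairings already fail at `x₁`, as the
character `x₁ ↦ 1, x₂ ↦ 0` shows.
-/

/-- The defining relation of `A = k⟨x₁,x₂⟩/(x₁x₂ + x₂x₁)`. -/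
def aRel (k : Type*) [Field k] :
    FreeAlgebra k (Fin 2) → FreeAlgebra k (Fin 2) → Prop := fun a b =>
  a = FreeAlgebra.ι k 0 * FreeAlgebra.ι k 1 + FreeAlgebra.ι k 1 * FreeAlgebra.ι k 0 ∧ b = 0

/-- The algebra `A = k⟨x₁,x₂⟩/(x₁x₂ + x₂x₁)`. -/
abbrev Aq (k : Type*) [Field k] := RingQuot (aRel k)

/-- The generator `x₁` of `A`. -/
def aX₁ (k : Type*) [Field k] : Aq k :=
  RingQuot.mkAlgHom k (aRel k) (FreeAlgebra.ι k 0)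

/-- The generator `x₂` of `A`. -/
def aX₂ (k : Type*) [Field k] : Aq k :=
  RingQuot.mkAlgHom k (aRel k) (FreeAlgebra.ι k 1)

section MatrixValued

open Matrix

variable {R A : Type*} [CommSemiring R] [Semiring A] [Algebra R A]

def vecMulEigenSubalgebra {B n : Type*} [Semiring B] [Algebra R B] [Fintype n] [DecidableEq n]
    (S : A →ₐ[R] Matrix n n B) (D : A →ₐ[R] B) (w : n → B) : Subalgebra R A where
  carrier := {r | w ᵥ* S r = D r • w}
  mul_mem' {a b} ha hb := by
    simp only [Set.mem_ofPred_eq, map_mul, ← vecMul_vecMul] at ha hb ⊢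
    rw [ha, smul_vecMul, hb, smul_smul]
  add_mem' {a b} ha hb := by
    simp only [Set.mem_ofPred_eq, map_add, vecMul_add, add_smul] at ha hb ⊢
    rw [ha, hb]
  algebraMap_mem' c := by
    ext i
    simp [algebraMap_eq_diagonal, vecMul_diagonal, Algebra.commutes]

variable {n : Type*} [Fintype n] [DecidableEq n]

def AlgHom.compMapMatrix (σ : A →ₐ[R] Matrix n n A) : A →ₐ[R] Matrix (n × n) (n × n) A :=
  (compAlgEquiv n n A R).toAlgHom.comp (σ.mapMatrix.comp σ)

theorem AlgHom.compMapMatrix_apply (σ : A →ₐ[R] Matrix n n A) (r : A) (a i d j : n) :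
    σ.compMapMatrix r (a, d) (i, j) = σ (σ r a i) d j := rfl

theorem vecMul_compMapMatrix_fin_two (σ : A →ₐ[R] Matrix (Fin 2) (Fin 2) A) (r : A)
    (i j : Fin 2) :
    ((fun p : Fin 2 × Fin 2 => if p.1 = p.2 then (0 : A) else 1) ᵥ* σ.compMapMatrix r) (i, j) =
      σ (σ r 0 i) 1 j + σ (σ r 1 i) 0 j := by
  simp [vecMul, dotProduct, Fintype.sum_prod_type, AlgHom.compMapMatrix_apply]

end MatrixValued

namespace Aq

variable {k : Type*} [Field k]

theorem aX₁_mul_aX₂_add_aX₂_mul_aX₁ : aX₁ k * aX₂ k + aX₂ k * aX₁ k = 0 := by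
  simpa [aX₁, aX₂] using RingQuot.mkAlgHom_rel k (s := aRel k) ⟨rfl, rfl⟩

variable {B : Type*} [Semiring B] [Algebra k B]

def lift (c d : B) (hcd : c * d + d * c = 0) : Aq k →ₐ[k] B :=
  RingQuot.liftAlgHom k ⟨FreeAlgebra.lift k ![c, d], by rintro _ _ ⟨rfl, rfl⟩; simp [hcd]⟩

@[simp]
theorem lift_aX₁ (c d : B) (hcd : c * d + d * c = 0) : lift c d hcd (aX₁ k) = c := by
  simp [lift, aX₁]

@[simp]
theorem lift_aX₂ (c d : B) (hcd : c * d + d * c = 0) : lift c d hcd (aX₂ k) = d := by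
  simp [lift, aX₂]

theorem algHom_ext {F G : Aq k →ₐ[k] B}
    (h₁ : F (aX₁ k) = G (aX₁ k)) (h₂ : F (aX₂ k) = G (aX₂ k)) : F = G :=
  RingQuot.ringQuot_ext' k F G <| FreeAlgebra.hom_ext <| funext fun i => by
    fin_cases i
    exacts [h₁, h₂]

theorem adjoin_aX₁_aX₂ : Algebra.adjoin k {aX₁ k, aX₂ k} = ⊤ := by
  have hι : Set.range (FreeAlgebra.ι k : Fin 2 → FreeAlgebra k (Fin 2)) =
      {FreeAlgebra.ι k 0, FreeAlgebra.ι k 1} := by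
    ext; simp [Fin.exists_fin_two, eq_comm]
  rw [← (RingQuot.mkAlgHom k (aRel k)).range_eq_top.2 (RingQuot.mkAlgHom_surjective k (aRel k)),
    ← Algebra.map_top, ← FreeAlgebra.adjoin_range_ι, ← Algebra.adjoin_image, hι, Set.image_pair]
  rfl

def rotate (c : k) : Aq k →ₐ[k] Aq k :=
  lift (c • aX₂ k) ((-c) • aX₁ k) <| by
    rw [smul_mul_smul_comm, smul_mul_smul_comm, mul_comm, ← smul_add, add_comm,
      aX₁_mul_aX₂_add_aX₂_mul_aX₁, smul_zero]

@[simp]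
theorem rotate_aX₁ (c : k) : rotate c (aX₁ k) = c • aX₂ k := lift_aX₁ ..

@[simp]
theorem rotate_aX₂ (c : k) : rotate c (aX₂ k) = -(c • aX₁ k) :=
  (lift_aX₂ ..).trans (neg_smul c (aX₁ k))

theorem rotate_comp_rotate_neg_inv {c : k} (hc : c ≠ 0) :
    (rotate c).comp (rotate (-c⁻¹)) = AlgHom.id k (Aq k) := by
  refine algHom_ext ?_ ?_ <;> simp [smul_smul, hc]

theorem rotate_neg_inv_comp_rotate {c : k} (hc : c ≠ 0) :
    (rotate (-c⁻¹)).comp (rotate c) = AlgHom.id k (Aq k) := by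
  refine algHom_ext ?_ ?_ <;> simp [smul_smul, hc]

theorem rotate_bijective {c : k} (hc : c ≠ 0) : Function.Bijective (rotate c) :=
  (AlgEquiv.ofAlgHom _ _ (rotate_comp_rotate_neg_inv hc) (rotate_neg_inv_comp_rotate hc)).bijective

def evalX₁ : Aq k →ₐ[k] k := lift 1 0 (by simp)

variable {h : k} {σ : Aq k →ₐ[k] Matrix (Fin 2) (Fin 2) (Aq k)}

theorem vecMulEigenSubalgebra_compMapMatrix_eq_top
    (hσ1 : σ (aX₁ k) = h • !![aX₁ k + aX₂ k, aX₁ k; aX₂ k, 0])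
    (hσ2 : σ (aX₂ k) = h • !![0, aX₁ k; -aX₂ k, -aX₁ k + aX₂ k]) :
    vecMulEigenSubalgebra σ.compMapMatrix (rotate (h ^ 2))
      (fun p => if p.1 = p.2 then 0 else 1) = ⊤ := by
  rw [eq_top_iff, ← adjoin_aX₁_aX₂, Algebra.adjoin_le_iff, Set.insert_subset_iff,
    Set.singleton_subset_iff]
  constructor <;>
  · ext ⟨i, j⟩
    rw [vecMul_compMapMatrix_fin_two]
    fin_cases i <;> fin_cases j <;> simp [hσ1, hσ2, smul_smul, pow_two]

theorem sigma_comp_add_sigma_comp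
    (hσ1 : σ (aX₁ k) = h • !![aX₁ k + aX₂ k, aX₁ k; aX₂ k, 0])
    (hσ2 : σ (aX₂ k) = h • !![0, aX₁ k; -aX₂ k, -aX₁ k + aX₂ k]) (r : Aq k) (i j : Fin 2) :
    σ (σ r 0 i) 1 j + σ (σ r 1 i) 0 j = if i = j then 0 else rotate (h ^ 2) r := by
  have hr : r ∈ vecMulEigenSubalgebra σ.compMapMatrix (rotate (h ^ 2))
      (fun p => if p.1 = p.2 then 0 else 1) := by
    rw [vecMulEigenSubalgebra_compMapMatrix_eq_top hσ1 hσ2]; trivial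
  rw [← vecMul_compMapMatrix_fin_two, congrFun hr (i, j)]
  by_cases hij : i = j <;> simp [hij]

end Aq

/-- Let `D` be the unique algebra endomorphism of `A` with `D(x₁) = h²x₂`,
`D(x₂) = −h²x₁`.  Then `σ₂₂∘σ₁₁ + σ₁₂∘σ₂₁ = D = σ₁₁∘σ₂₂ + σ₂₁∘σ₁₂` (so the
determinant of `σ` for `P = (−1,0)` is `D`, a bijective algebra endomorphism), while
`σ₂₂∘σ₁₁ + σ₂₁∘σ₁₂ ≠ D` and `σ₁₁∘σ₂₂ + σ₁₂∘σ₂₁ ≠ D`. -/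
theorem det_sigma_eq (k : Type*) [Field k] (h : k) (hh : h ≠ 0)
    (σ : Aq k →ₐ[k] Matrix (Fin 2) (Fin 2) (Aq k))
    (hσ1 : σ (aX₁ k) = h • !![aX₁ k + aX₂ k, aX₁ k; aX₂ k, 0])
    (hσ2 : σ (aX₂ k) = h • !![0, aX₁ k; -aX₂ k, -aX₁ k + aX₂ k]) :
    (∃! D : Aq k →ₐ[k] Aq k,
      D (aX₁ k) = (h ^ 2) • aX₂ k ∧ D (aX₂ k) = -((h ^ 2) • aX₁ k)) ∧
    (∀ D : Aq k →ₐ[k] Aq k,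
      (D (aX₁ k) = (h ^ 2) • aX₂ k ∧ D (aX₂ k) = -((h ^ 2) • aX₁ k)) →
      -- σ₂₂ ∘ σ₁₁ + σ₁₂ ∘ σ₂₁ = D
      (∀ r : Aq k, σ (σ r 0 0) 1 1 + σ (σ r 1 0) 0 1 = D r) ∧
      -- σ₁₁ ∘ σ₂₂ + σ₂₁ ∘ σ₁₂ = D
      (∀ r : Aq k, σ (σ r 1 1) 0 0 + σ (σ r 0 1) 1 0 = D r) ∧
      -- D is a bijective algebra endomorphism
      Function.Bijective D ∧
      -- σ₂₂ ∘ σ₁₁ + σ₂₁ ∘ σ₁₂ ≠ D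
      ¬(∀ r : Aq k, σ (σ r 0 0) 1 1 + σ (σ r 0 1) 1 0 = D r) ∧
      -- σ₁₁ ∘ σ₂₂ + σ₁₂ ∘ σ₂₁ ≠ D
      ¬(∀ r : Aq k, σ (σ r 1 1) 0 0 + σ (σ r 1 0) 0 1 = D r)) := by
  have eq_rotate {D : Aq k →ₐ[k] Aq k}
      (hD : D (aX₁ k) = (h ^ 2) • aX₂ k ∧ D (aX₂ k) = -((h ^ 2) • aX₁ k)) :
      D = Aq.rotate (h ^ 2) :=
    Aq.algHom_ext (by rw [hD.1, Aq.rotate_aX₁]) (by rw [hD.2, Aq.rotate_aX₂])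
  refine ⟨⟨Aq.rotate (h ^ 2), ⟨Aq.rotate_aX₁ _, Aq.rotate_aX₂ _⟩, fun _ => eq_rotate⟩, ?_⟩
  rintro D hD
  obtain rfl := eq_rotate hD
  have hσσ := Aq.sigma_comp_add_sigma_comp hσ1 hσ2
  refine ⟨fun r => hσσ r 0 1, fun r => (add_comm _ _).trans (hσσ r 1 0),
    Aq.rotate_bijective (pow_ne_zero 2 hh), fun hD => ?_, fun hD => ?_⟩ <;>
  · simpa [hσ1, hσ2, Aq.evalX₁, hh] using congrArg Aq.evalX₁ (hD (aX₁ k))
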